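/- arXiv:1511.03511 — 3 statements merged into one kernel-verified Lean document; each statement's English description precedes it below -/
import Mathlib

section
/- Let A be a symmetric 2n×2n matrix of block form [[0, C],[Cᵗ, 0]] with C a (0,±1)-matrix with no zero row. Then A has exactly two distinct eigenvalues if and only if CCᵗ = CᵗC = γI for some positive real γ (i.e., C is an orthogonal signed matrix). -/
open Matrix

/-- `μ` is an eigenvalue of the real matrix `A`. -/
def IsEigenvalue {n : Type*} [Fintype n] (A : Matrix n n ℝ) (μ : ℝ) : Prop :=
  ∃ v : n → ℝ, v ≠ 0 ∧ A.mulVec v = μ • v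

/-!
Conjugating by `diag(1, -1)` negates `A = [[0, C], [Cᵀ, 0]]`, so its spectrum is symmetric under
`ν ↦ -ν`. Two distinct eigenvalues are therefore `±λ` with `λ ≠ 0`; as `A` is symmetric it is
diagonalisable, so `A² = λ² I`, which in block form reads `CCᵀ = CᵀC = λ² I`. Conversely, if
`A² = γ I` then every eigenvalue is `±√γ`, one of them occurs, and by symmetry so does the other.
-/

namespace IsEigenvalue

variable {ι : Type*} [Fintype ι] [DecidableEq ι] {A : Matrix ι ι ℝ} {ν : ℝ}

theorem neg_of_mul_eq_neg_mul {S : Matrix ι ι ℝ} (hS : S * S = 1) (hSA : A * S = -(S * A))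
    (h : IsEigenvalue A ν) : IsEigenvalue A (-ν) := by
  obtain ⟨v, hv, hAv⟩ := h
  refine ⟨S *ᵥ v, fun h0 => hv ?_, ?_⟩
  · simpa [mulVec_mulVec, hS, one_mulVec] using congrArg (S *ᵥ ·) h0
  · rw [mulVec_mulVec, hSA, neg_mulVec, ← mulVec_mulVec, hAv, mulVec_smul, neg_smul]

theorem mul_self_eq {γ : ℝ} (hA : A * A = γ • 1) (h : IsEigenvalue A ν) : ν * ν = γ := by
  obtain ⟨v, hv, hAv⟩ := h
  obtain ⟨k, hk⟩ := Function.ne_iff.mp hv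
  have hsq : (ν * ν) • v = γ • v := by
    rw [← smul_smul, ← hAv, ← mulVec_smul, ← hAv, mulVec_mulVec, hA, smul_mulVec, one_mulVec]
  exact mul_right_cancel₀ hk (by simpa using congrFun hsq k)

end IsEigenvalue

theorem isEigenvalue_or_isEigenvalue_neg_of_mul_self_eq {ι : Type*} [Fintype ι] [DecidableEq ι]
    [Nonempty ι] {A : Matrix ι ι ℝ} {s : ℝ} (hA : A * A = (s * s) • 1) :
    IsEigenvalue A s ∨ IsEigenvalue A (-s) := by
  obtain ⟨i⟩ := ‹Nonempty ι›
  set w : ι → ℝ := Pi.single i 1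
  have hw : w ≠ 0 := by simp [w]
  by_cases h : A *ᵥ w + s • w = 0
  · exact .inr ⟨w, hw, by rw [neg_smul]; exact eq_neg_of_add_eq_zero_left h⟩
  · refine .inl ⟨A *ᵥ w + s • w, h, ?_⟩
    rw [mulVec_add, mulVec_smul, mulVec_mulVec, hA, smul_mulVec, one_mulVec, smul_add, smul_smul,
      add_comm]

theorem Matrix.IsHermitian.mul_self_eq_smul_one {ι : Type*} [Fintype ι] [DecidableEq ι]
    {A : Matrix ι ι ℝ} (hA : A.IsHermitian) {γ : ℝ}
    (h : ∀ ν, IsEigenvalue A ν → ν * ν = γ) : A * A = γ • 1 := by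
  have heig : ∀ i, hA.eigenvalues i * hA.eigenvalues i = γ := fun i =>
    h _ ⟨_, (WithLp.ofLp_eq_zero 2).ne.2 <| hA.eigenvectorBasis.orthonormal.ne_zero i,
      hA.mulVec_eigenvectorBasis i⟩
  have hD : diagonal (RCLike.ofReal ∘ hA.eigenvalues) * diagonal (RCLike.ofReal ∘ hA.eigenvalues)
      = γ • (1 : Matrix ι ι ℝ) := by
    rw [diagonal_mul_diagonal, ← diagonal_one, ← diagonal_smul]
    congr 1; ext i; simp [heig]
  rw [hA.spectral_theorem, ← map_mul, hD, map_smul, map_one]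

section Bipartite

variable {m n : Type*}

theorem isHermitian_fromBlocks_zero_transpose (B : Matrix m n ℝ) :
    (fromBlocks 0 B Bᵀ 0).IsHermitian := by
  rw [isHermitian_fromBlocks_iff]
  simp [IsHermitian, conjTranspose_eq_transpose_of_trivial]

variable [Fintype m] [Fintype n] [DecidableEq m] [DecidableEq n]

theorem fromBlocks_zero_mul_self (B : Matrix m n ℝ) (D : Matrix n m ℝ) :
    fromBlocks 0 B D 0 * fromBlocks 0 B D 0 = fromBlocks (B * D) 0 0 (D * B) := by
  simp [fromBlocks_multiply]

theorem fromBlocks_zero_mul_self_eq_smul_one_iff (B : Matrix m n ℝ) (D : Matrix n m ℝ) (γ : ℝ) :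
    fromBlocks 0 B D 0 * fromBlocks 0 B D 0 = γ • 1 ↔ B * D = γ • 1 ∧ D * B = γ • 1 := by
  rw [fromBlocks_zero_mul_self, ← fromBlocks_one, fromBlocks_smul, fromBlocks_inj]
  simp

theorem IsEigenvalue.neg_of_fromBlocks_zero {B : Matrix m n ℝ} {D : Matrix n m ℝ} {ν : ℝ}
    (h : IsEigenvalue (fromBlocks 0 B D 0) ν) : IsEigenvalue (fromBlocks 0 B D 0) (-ν) :=
  IsEigenvalue.neg_of_mul_eq_neg_mul (S := fromBlocks 1 0 0 (-1)) (by simp [fromBlocks_multiply])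
    (by simp [fromBlocks_multiply, fromBlocks_neg]) h

end Bipartite

theorem stmt2_general {n : ℕ} (hn : 0 < n) (C : Matrix (Fin n) (Fin n) ℝ) :
    (∃ lam mu : ℝ, lam ≠ mu ∧
        IsEigenvalue (fromBlocks 0 C Cᵀ 0) lam ∧
        IsEigenvalue (fromBlocks 0 C Cᵀ 0) mu ∧
        ∀ ν : ℝ, IsEigenvalue (fromBlocks 0 C Cᵀ 0) ν → ν = lam ∨ ν = mu) ↔
      (∃ γ : ℝ, 0 < γ ∧ C * Cᵀ = γ • (1 : Matrix (Fin n) (Fin n) ℝ) ∧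
        Cᵀ * C = γ • (1 : Matrix (Fin n) (Fin n) ℝ)) := by
  simp_rw [← fromBlocks_zero_mul_self_eq_smul_one_iff]
  constructor
  · rintro ⟨lam, mu, hne, hlam, hmu, hall⟩
    have hmu_eq : mu = -lam := by
      rcases hall _ hlam.neg_of_fromBlocks_zero with h | h
      · rcases hall _ hmu.neg_of_fromBlocks_zero with h' | h' <;> grind
      · exact h.symm
    refine ⟨lam * lam, mul_self_pos.2 fun h0 => hne (by simp [hmu_eq, h0]),
      (isHermitian_fromBlocks_zero_transpose C).mul_self_eq_smul_one fun ν hν => ?_⟩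
    rcases hall ν hν with rfl | rfl <;> simp [hmu_eq]
  · rintro ⟨γ, hγ, hsq⟩
    have : Nonempty (Fin n) := ⟨⟨0, hn⟩⟩
    set s := √γ
    rw [← Real.mul_self_sqrt hγ.le] at hsq
    have hboth : IsEigenvalue (fromBlocks 0 C Cᵀ 0) s ∧
        IsEigenvalue (fromBlocks 0 C Cᵀ 0) (-s) := by
      rcases isEigenvalue_or_isEigenvalue_neg_of_mul_self_eq hsq with h | h
      · exact ⟨h, h.neg_of_fromBlocks_zero⟩
      · exact ⟨by simpa using h.neg_of_fromBlocks_zero, h⟩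
    refine ⟨s, -s, by linarith [Real.sqrt_pos.2 hγ], hboth.1, hboth.2, fun ν hν => ?_⟩
    exact mul_self_eq_mul_self_iff.1 (hν.mul_self_eq hsq)

/-- For a bipartite signed adjacency matrix `A = [[0,C],[Cᵗ,0]]` with `C` a
`(0,±1)`-matrix having no zero row, `A` has exactly two distinct eigenvalues iff
`CCᵗ = CᵗC = γI` for some `γ > 0`, i.e. `C` is an orthogonal signed matrix. -/
theorem stmt2 {n : ℕ} (hn : 0 < n) (C : Matrix (Fin n) (Fin n) ℝ)
    (hentries : ∀ i j, C i j = 0 ∨ C i j = 1 ∨ C i j = -1)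
    (hrow : ∀ i, ∃ j, C i j ≠ 0) :
    (∃ lam mu : ℝ, lam ≠ mu ∧
        IsEigenvalue (fromBlocks 0 C Cᵀ 0) lam ∧
        IsEigenvalue (fromBlocks 0 C Cᵀ 0) mu ∧
        ∀ ν : ℝ, IsEigenvalue (fromBlocks 0 C Cᵀ 0) ν → ν = lam ∨ ν = mu) ↔
      (∃ γ : ℝ, 0 < γ ∧ C * Cᵀ = γ • (1 : Matrix (Fin n) (Fin n) ℝ) ∧
        Cᵀ * C = γ • (1 : Matrix (Fin n) (Fin n) ℝ)) :=
  stmt2_general hn C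
end

section
/- Let G be a k-regular bipartite graph on parts X, Y each of size n with k ≤ n/2, and suppose λ₂(G) ≤ 2√(k−1) (G is Ramanujan). Then the bipartite complement G_b^c is an (n−k)-regular Ramanujan graph: λ₂(G_b^c) ≤ 2√(n−k−1). -/
/-!
Write `A = A(G)`, `β = 2√(k-1)`, `γ = 2√(n-k-1) ≥ β`. Negating the coordinates on `Y` turns the
form of `A` into its negative, and `A(G_b^c) = A(K_{n,n}) - A`, so for `w = (x, y)` with
`Σx + Σy = 0` the form of `A(G_b^c)` at `w` is `-2(Σx)²` plus the form of `A` at `(x, -y)`.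
Splitting `(x, -y)` along `1`, the form of `A` is at most `γ` on `1^⊥` and `k` on `1`, and the
excess `(k - γ)(Σx)²·2/n` coming from `1` is absorbed by `-2(Σx)²` because `k ≤ n`.

The hypothesis on `λ₂(G)` only provides some vector `v` with `A ≤ β` on `v^⊥`. If `k ≤ γ`, the
bound `λ_max(A) ≤ k` is enough. Otherwise `β < k`, so `v` is not orthogonal to `1` (the Rayleigh
quotient of `1` is `k`), and shifting a vector of `1^⊥` along `1` into `v^⊥` shows `A ≤ β` on `1^⊥`.
-/

open Matrix

/-- The second largest eigenvalue of the symmetric matrix `A` is at most `b`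
(Courant–Fischer formulation). -/
def SecondEigLE {n : Type*} [Fintype n] (A : Matrix n n ℝ) (b : ℝ) : Prop :=
  ∃ v : n → ℝ, v ≠ 0 ∧ ∀ w : n → ℝ, w ⬝ᵥ v = 0 → w ⬝ᵥ A.mulVec w ≤ b * (w ⬝ᵥ w)

open Finset

theorem SecondEigLE.nonempty {m : Type*} [Fintype m] {A : Matrix m m ℝ} {β : ℝ}
    (h : SecondEigLE A β) : Nonempty m := by
  obtain ⟨v, hv, -⟩ := h
  obtain ⟨i, -⟩ := Function.ne_iff.mp hv
  exact ⟨i⟩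

namespace Matrix

section Regular

variable {m : Type*} [Fintype m] {A : Matrix m m ℝ} {d β γ : ℝ}

lemma add_smul_one_dotProduct_self {u : m → ℝ} (hu : ∑ i, u i = 0) (c : ℝ) :
    (u + c • 1) ⬝ᵥ (u + c • 1) = u ⬝ᵥ u + c ^ 2 * Fintype.card m := by
  simp only [add_dotProduct, dotProduct_add]
  simp only [smul_dotProduct, dotProduct_smul, one_dotProduct_one, smul_eq_mul]
  rw [dotProduct_one, one_dotProduct, hu]
  ring

lemma add_smul_one_dotProduct_mulVec (hA : A.IsSymm) (hreg : A *ᵥ 1 = d • 1) {u : m → ℝ}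
    (hu : ∑ i, u i = 0) (c : ℝ) :
    (u + c • 1) ⬝ᵥ A *ᵥ (u + c • 1) = u ⬝ᵥ A *ᵥ u + c ^ 2 * d * Fintype.card m := by
  have h1u : (1 : m → ℝ) ⬝ᵥ A *ᵥ u = 0 := by
    rw [dotProduct_mulVec, ← mulVec_transpose, hA.eq, hreg, smul_dotProduct, one_dotProduct, hu,
      smul_zero]
  simp only [mulVec_add, mulVec_smul, hreg, add_dotProduct]
  simp only [dotProduct_add, smul_dotProduct, dotProduct_smul, h1u, one_dotProduct_one,
    smul_eq_mul]
  rw [dotProduct_one, hu]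
  ring

lemma dotProduct_mulVec_le_of_nonneg (hA : A.IsSymm) (hnonneg : ∀ i j, 0 ≤ A i j)
    (hreg : A *ᵥ 1 = d • 1) (u : m → ℝ) : u ⬝ᵥ A *ᵥ u ≤ d * (u ⬝ᵥ u) := by
  have hrow (i : m) : ∑ j, A i j = d := by simpa [mulVec, dotProduct] using congrFun hreg i
  have hswap : ∑ i, ∑ j, A i j * u j ^ 2 = ∑ i, ∑ j, A i j * u i ^ 2 := by
    rw [sum_comm]
    simp only [hA.apply]
  calc u ⬝ᵥ A *ᵥ u = ∑ i, ∑ j, u i * A i j * u j := by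
        simp only [dotProduct, mulVec, mul_sum, mul_assoc]
    _ ≤ ∑ i, ∑ j, (A i j * u i ^ 2 + A i j * u j ^ 2) / 2 :=
        sum_le_sum fun i _ => sum_le_sum fun j _ => by
          nlinarith [mul_nonneg (hnonneg i j) (sq_nonneg (u i - u j))]
    _ = ∑ i, ∑ j, A i j * u i ^ 2 := by
        simp only [← sum_div, sum_add_distrib, hswap]
        ring
    _ = d * (u ⬝ᵥ u) := by
        simp only [← sum_mul, hrow, dotProduct, mul_sum, sq]

lemma dotProduct_mulVec_le_of_secondEigLE_of_lt (hA : A.IsSymm) (hreg : A *ᵥ 1 = d • 1)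
    (h2 : SecondEigLE A β) (hβd : β < d) {u : m → ℝ} (hu : ∑ i, u i = 0) :
    u ⬝ᵥ A *ᵥ u ≤ β * (u ⬝ᵥ u) := by
  have hcard : (0 : ℝ) < Fintype.card m := by
    have := h2.nonempty
    exact_mod_cast Fintype.card_pos
  obtain ⟨v, -, hv⟩ := h2
  have hsum : ∑ i, v i ≠ 0 := by
    intro hsum
    have h1 := hv 1 (by rw [one_dotProduct, hsum])
    rw [hreg, dotProduct_smul, one_dotProduct_one, smul_eq_mul] at h1
    nlinarith
  set c := -(u ⬝ᵥ v) / ∑ i, v i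
  have hz : (u + c • 1) ⬝ᵥ v = 0 := by
    rw [add_dotProduct, smul_dotProduct, one_dotProduct, smul_eq_mul, div_mul_cancel₀ _ hsum]
    ring
  have hzv := hv _ hz
  rw [add_smul_one_dotProduct_mulVec hA hreg hu, add_smul_one_dotProduct_self hu] at hzv
  nlinarith [mul_nonneg (mul_nonneg (sq_nonneg c) hcard.le) (sub_nonneg.2 hβd.le)]

lemma dotProduct_mulVec_le_of_secondEigLE_of_sum_eq_zero (hA : A.IsSymm)
    (hnonneg : ∀ i j, 0 ≤ A i j) (hreg : A *ᵥ 1 = d • 1) (h2 : SecondEigLE A β) (hβγ : β ≤ γ)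
    {u : m → ℝ} (hu : ∑ i, u i = 0) : u ⬝ᵥ A *ᵥ u ≤ γ * (u ⬝ᵥ u) := by
  have huu : 0 ≤ u ⬝ᵥ u := by simpa using dotProduct_self_star_nonneg u
  rcases le_or_gt d γ with hdγ | hγd
  · exact (dotProduct_mulVec_le_of_nonneg hA hnonneg hreg u).trans (by gcongr)
  · exact (dotProduct_mulVec_le_of_secondEigLE_of_lt hA hreg h2 (hβγ.trans_lt hγd) hu).trans
      (by gcongr)

lemma dotProduct_mulVec_le_of_secondEigLE (hA : A.IsSymm) (hnonneg : ∀ i j, 0 ≤ A i j)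
    (hreg : A *ᵥ 1 = d • 1) (h2 : SecondEigLE A β) (hβγ : β ≤ γ) (z : m → ℝ) :
    z ⬝ᵥ A *ᵥ z ≤ γ * (z ⬝ᵥ z) + (d - γ) * ((∑ i, z i) ^ 2 / Fintype.card m) := by
  set c := (∑ i, z i) / Fintype.card m
  have hc : c * Fintype.card m = ∑ i, z i := div_mul_cancel_of_imp fun h => by
    have := Fintype.card_eq_zero_iff.mp (by exact_mod_cast h)
    simp
  set u := z - c • 1
  have hu : ∑ i, u i = 0 := by simp [u, sum_sub_distrib, ← hc, mul_comm]
  have hz : u + c • 1 = z := sub_add_cancel z _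
  have hsq : (∑ i, z i) ^ 2 / Fintype.card m = c ^ 2 * Fintype.card m := by
    rw [← hc, mul_pow, sq (Fintype.card m : ℝ), mul_div_assoc, mul_self_div_self]
  calc z ⬝ᵥ A *ᵥ z = u ⬝ᵥ A *ᵥ u + c ^ 2 * d * Fintype.card m := by
        rw [← hz, add_smul_one_dotProduct_mulVec hA hreg hu]
    _ ≤ γ * (u ⬝ᵥ u) + c ^ 2 * d * Fintype.card m := by
        gcongr
        exact dotProduct_mulVec_le_of_secondEigLE_of_sum_eq_zero hA hnonneg hreg h2 hβγ hu
    _ = γ * (z ⬝ᵥ z) + (d - γ) * ((∑ i, z i) ^ 2 / Fintype.card m) := by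
        rw [← hz, add_smul_one_dotProduct_self hu, hz, hsq]
        ring

end Regular

section Bipartite

variable {ι κ : Type*} [Fintype ι] [Fintype κ]

lemma sumElim_dotProduct_fromBlocks_mulVec (M : Matrix ι κ ℝ) (x : ι → ℝ) (y : κ → ℝ) :
    Sum.elim x y ⬝ᵥ fromBlocks 0 M Mᵀ 0 *ᵥ Sum.elim x y = 2 * (x ⬝ᵥ M *ᵥ y) := by
  rw [fromBlocks_mulVec, sumElim_dotProduct_sumElim]
  simp only [Sum.elim_comp_inl, Sum.elim_comp_inr, zero_mulVec, zero_add, add_zero,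
    mulVec_transpose, dotProduct_comm y, ← dotProduct_mulVec]
  ring

lemma fromBlocks_mulVec_one {M : Matrix ι κ ℝ} {d : ℝ} (hrow : ∀ i, ∑ j, M i j = d)
    (hcol : ∀ j, ∑ i, M i j = d) : fromBlocks 0 M Mᵀ 0 *ᵥ 1 = d • 1 := by
  ext (i | j) <;> simp [mulVec, dotProduct, hrow, hcol]

lemma dotProduct_of_one_sub_mulVec (M : Matrix ι κ ℝ) (x : ι → ℝ) (y : κ → ℝ) :
    x ⬝ᵥ (of fun i j => 1 - M i j) *ᵥ y = (∑ i, x i) * (∑ j, y j) - x ⬝ᵥ M *ᵥ y := by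
  rw [sum_mul_sum]
  simp only [dotProduct, mulVec, of_apply, sub_mul, one_mul, mul_sub, sum_sub_distrib, mul_sum]

lemma sumElim_dotProduct_fromBlocks_of_one_sub_mulVec (M : Matrix ι κ ℝ) (x : ι → ℝ)
    (y : κ → ℝ) :
    Sum.elim x y ⬝ᵥ fromBlocks 0 (of fun i j => 1 - M i j) (of fun i j => 1 - M i j)ᵀ 0 *ᵥ
        Sum.elim x y =
      2 * ((∑ i, x i) * ∑ j, y j) + Sum.elim x (-y) ⬝ᵥ fromBlocks 0 M Mᵀ 0 *ᵥ Sum.elim x (-y) := by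
  rw [sumElim_dotProduct_fromBlocks_mulVec, sumElim_dotProduct_fromBlocks_mulVec,
    dotProduct_of_one_sub_mulVec, mulVec_neg, dotProduct_neg]
  ring

end Bipartite

end Matrix

/-- Let `G` be a `k`-regular bipartite graph with parts of size `n` (`B` is its
biadjacency matrix), `k ≤ n/2`, and `λ₂(G) ≤ 2√(k−1)` (`G` is Ramanujan). Then the
bipartite complement `G_b^c` (biadjacency matrix `J − B`) is `(n−k)`-regular and
Ramanujan: `λ₂(G_b^c) ≤ 2√(n−k−1)`. -/
theorem stmt16 {n k : ℕ} (B : Matrix (Fin n) (Fin n) ℝ)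
    (hentries : ∀ i j, B i j = 0 ∨ B i j = 1)
    (hrow : ∀ i, ∑ j, B i j = (k : ℝ)) (hcol : ∀ j, ∑ i, B i j = (k : ℝ))
    (hk : (k : ℝ) ≤ (n : ℝ) / 2)
    (hram : SecondEigLE (fromBlocks 0 B Bᵀ 0) (2 * Real.sqrt ((k : ℝ) - 1))) :
    (∀ i, ∑ j, ((1 : ℝ) - B i j) = (n : ℝ) - k) ∧
    (∀ j, ∑ i, ((1 : ℝ) - B i j) = (n : ℝ) - k) ∧
    SecondEigLE
      (fromBlocks 0 (Matrix.of fun i j => (1 : ℝ) - B i j)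
        (Matrix.of fun i j => (1 : ℝ) - B i j)ᵀ 0)
      (2 * Real.sqrt ((n : ℝ) - k - 1)) := by
  refine ⟨fun i => by simp [sum_sub_distrib, hrow], fun j => by simp [sum_sub_distrib, hcol], ?_⟩
  have hB (i j : Fin n) : 0 ≤ B i j := by rcases hentries i j with h | h <;> simp [h]
  have hnonneg : ∀ p q, 0 ≤ fromBlocks 0 B Bᵀ 0 p q := by rintro (i | i) (j | j) <;> simp [hB]
  have hβγ : 2 * Real.sqrt ((k : ℝ) - 1) ≤ 2 * Real.sqrt ((n : ℝ) - k - 1) := by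
    gcongr
    linarith
  have hn : 0 < n := by obtain ⟨i | i⟩ := hram.nonempty <;> exact i.pos
  refine ⟨1, Function.ne_iff.mpr ⟨Sum.inl ⟨0, hn⟩, one_ne_zero⟩, fun w hw => ?_⟩
  obtain ⟨x, y, rfl⟩ : ∃ x y, w = Sum.elim x y :=
    ⟨w ∘ Sum.inl, w ∘ Sum.inr, (Sum.elim_comp_inl_inr w).symm⟩
  have hxy : ∑ j, y j = -∑ i, x i := by
    rw [dotProduct_one, Fintype.sum_sum_type] at hw
    simp only [Sum.elim_inl, Sum.elim_inr] at hw
    linarith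
  have hflip := dotProduct_mulVec_le_of_secondEigLE (IsSymm.fromBlocks (by simp) rfl (by simp))
    hnonneg (fromBlocks_mulVec_one hrow hcol) hram hβγ (Sum.elim x (-y))
  rw [sumElim_dotProduct_fromBlocks_of_one_sub_mulVec, sumElim_dotProduct_sumElim]
  rw [sumElim_dotProduct_sumElim, neg_dotProduct_neg, Fintype.sum_sum_type] at hflip
  simp only [Sum.elim_inl, Sum.elim_inr, Pi.neg_apply, sum_neg_distrib, hxy, neg_neg,
    Fintype.card_sum, Fintype.card_fin, Nat.cast_add] at hflip
  have hexcess : (k - 2 * Real.sqrt ((n : ℝ) - k - 1)) * ((∑ i, x i + ∑ i, x i) ^ 2 / (n + n))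
      ≤ 2 * (∑ i, x i) ^ 2 :=
    calc _ ≤ (n : ℝ) * ((∑ i, x i + ∑ i, x i) ^ 2 / (n + n)) := by
          gcongr
          linarith [Real.sqrt_nonneg ((n : ℝ) - k - 1)]
      _ = 2 * (∑ i, x i) ^ 2 := by
          field_simp
          ring
  rw [hxy]
  linarith
end

section
/- For k ≥ 2, the bipartite complement of k disjoint copies of the 4-cycle C₄ has spectrum {±(2k−2), (±2) with multiplicity k−1 each, 0 with multiplicity 2k}, and in particular is a (2k−2)-regular Ramanujan graph. -/
open Matrix Polynomial

/-!
Index each side of the graph by `Fin k ⊕ Fin k` (the copy of `C₄` and the position in it), so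
that the biadjacency matrix becomes `fromBlocks K K K K`, `K = J - I` the adjacency matrix of the
complete graph `K_k`. The identity `det [[A, B], [B, A]] = det (A - B) * det (A + B)`, applied
twice, reduces the characteristic polynomial to `X ^ (2k)` times those of `±2 (J - I)`, which
follow from the rank-one matrix `J`.

For `w ⊥ 𝟙`, let `s, t` be the vectors of pair sums of `w` on the two sides and `S, T` their
totals. The quadratic form is `2 (S T - s ⬝ t)`; orthogonality gives `S + T = 0`, so `S T ≤ 0`,
and `-s ⬝ t ≤ w ⬝ w` coordinatewise. Hence `λ₂ ≤ 2 ≤ 2 √(2k - 3)` once `k ≥ 2`.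
-/

namespace Matrix

theorem dotProduct_fromBlocks_zero_mulVec {m n R : Type*} [Fintype m] [Fintype n]
    [CommSemiring R] (B : Matrix n m R) (w : n ⊕ m → R) :
    w ⬝ᵥ (fromBlocks 0 B Bᵀ 0 *ᵥ w) = 2 * ((w ∘ Sum.inl) ⬝ᵥ (B *ᵥ (w ∘ Sum.inr))) := by
  obtain ⟨x, y, rfl⟩ : ∃ x y, w = Sum.elim x y := ⟨_, _, (Sum.elim_comp_inl_inr w).symm⟩
  rw [fromBlocks_mulVec, Sum.elim_comp_inl, Sum.elim_comp_inr, sumElim_dotProduct_sumElim,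
    zero_mulVec, zero_mulVec, zero_add, add_zero, dotProduct_transpose_mulVec, two_mul]

variable {n R : Type*} [Fintype n] [DecidableEq n] [CommRing R]

theorem det_fromBlocks_self (A B : Matrix n n R) :
    (fromBlocks A B B A).det = (A - B).det * (A + B).det := by
  have h : fromBlocks 1 0 1 1 * fromBlocks A B B A * fromBlocks 1 0 (-1) 1 =
      fromBlocks (A - B) B 0 (A + B) := by
    simp only [fromBlocks_multiply]
    congr 1 <;> simp <;> abel
  simpa [det_mul, det_fromBlocks_zero₁₂, det_fromBlocks_zero₂₁] using congrArg det h

theorem charpoly_fromBlocks_self (M N : Matrix n n R) :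
    (fromBlocks M N N M).charpoly = (M - N).charpoly * (M + N).charpoly := by
  rw [charpoly, charmatrix_fromBlocks, det_fromBlocks_self]
  simp only [charpoly, charmatrix, map_sub, map_add]
  congr 2 <;> simp <;> abel

theorem charpoly_vecMulVec_sub_scalar [Nonempty n] (u v : n → R) (μ : R) :
    (vecMulVec u v - scalar n μ).charpoly =
      (X + C μ) ^ (Fintype.card n - 1) * (X + C μ - C (u ⬝ᵥ v)) := by
  obtain ⟨m, hm⟩ : ∃ m, Fintype.card n = m + 1 :=
    Nat.exists_eq_succ_of_ne_zero Fintype.card_ne_zero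
  rw [charpoly_sub_scalar, charpoly_vecMulVec, hm]
  simp [smul_eq_C_mul, pow_succ]
  ring

end Matrix

namespace SecondEigLE
variable {m n : Type*} [Fintype m] [Fintype n] {A : Matrix n n ℝ} {b : ℝ}

theorem mono (h : SecondEigLE A b) {b' : ℝ} (hb : b ≤ b') : SecondEigLE A b' := by
  obtain ⟨v, hv, hA⟩ := h
  exact ⟨v, hv, fun w hw => (hA w hw).trans <|
    mul_le_mul_of_nonneg_right hb <| Finset.sum_nonneg fun i _ => mul_self_nonneg (w i)⟩

theorem submatrix (h : SecondEigLE A b) (e : m ≃ n) : SecondEigLE (A.submatrix e e) b := by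
  obtain ⟨v, hv, hA⟩ := h
  refine ⟨v ∘ e, fun h0 => hv ?_, fun w hw => ?_⟩
  · exact funext fun i => by simpa using congrFun h0 (e.symm i)
  · have := hA (w ∘ e.symm) (by rwa [comp_equiv_symm_dotProduct])
    rwa [comp_equiv_symm_dotProduct, comp_equiv_symm_dotProduct, Function.comp_assoc,
      e.symm_comp_self, Function.comp_id, ← submatrix_mulVec_equiv] at this

end SecondEigLE

section C4Complement
variable {R n : Type*} [CommRing R] [DecidableEq n]

variable (R n) in
/-- Each side of the bipartite complement of `n` disjoint copies of `C₄` is modelled as `n ⊕ n`,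
`Sum.elim id id x` being the copy containing `x`; vertices are adjacent iff their copies differ. -/
def c4ComplBiadj : Matrix (n ⊕ n) (n ⊕ n) R :=
  ((⊤ : SimpleGraph n).adjMatrix R).submatrix (Sum.elim id id) (Sum.elim id id)

variable (R n) in
def c4ComplAdj : Matrix ((n ⊕ n) ⊕ (n ⊕ n)) ((n ⊕ n) ⊕ (n ⊕ n)) R :=
  fromBlocks 0 (c4ComplBiadj R n) (c4ComplBiadj R n) 0

def foldSum (x : n ⊕ n → R) : n → R := x ∘ Sum.inl + x ∘ Sum.inr

theorem c4ComplBiadj_eq_fromBlocks :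
    c4ComplBiadj R n =
      fromBlocks ((⊤ : SimpleGraph n).adjMatrix R) ((⊤ : SimpleGraph n).adjMatrix R)
        ((⊤ : SimpleGraph n).adjMatrix R) ((⊤ : SimpleGraph n).adjMatrix R) := by
  ext (i | i) (j | j) <;> rfl

theorem transpose_c4ComplBiadj : (c4ComplBiadj R n)ᵀ = c4ComplBiadj R n := by
  rw [c4ComplBiadj, transpose_submatrix, SimpleGraph.transpose_adjMatrix]

theorem adjMatrix_top_add_self [Fintype n] (c : R) :
    c • (⊤ : SimpleGraph n).adjMatrix R + c • (⊤ : SimpleGraph n).adjMatrix R =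
      vecMulVec (fun _ => 2 * c) 1 - scalar n (2 * c) := by
  ext i j
  by_cases h : i = j <;> simp [SimpleGraph.adjMatrix_top, h, two_mul]

theorem sum_adjMatrix_top_apply [Fintype n] [Nonempty n] (i : n) :
    ∑ j, (⊤ : SimpleGraph n).adjMatrix R i j = Fintype.card n - 1 := by
  simp [Finset.sum_ite, Finset.filter_ne, Nat.cast_sub Fintype.card_pos]

theorem dotProduct_adjMatrix_top_mulVec [Fintype n] (x y : n → R) :
    x ⬝ᵥ ((⊤ : SimpleGraph n).adjMatrix R *ᵥ y) = (∑ i, x i) * (∑ i, y i) - x ⬝ᵥ y := by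
  simp only [dotProduct, mulVec, SimpleGraph.adjMatrix_top, of_apply, ite_mul, zero_mul, one_mul,
    Finset.sum_ite, Finset.sum_const_zero, zero_add, Finset.filter_ne,
    Finset.sum_erase_eq_sub (Finset.mem_univ _), mul_sub, Finset.sum_sub_distrib, Finset.sum_mul]

theorem c4ComplBiadj_mulVec [Fintype n] (y : n ⊕ n → R) :
    c4ComplBiadj R n *ᵥ y = Sum.elim ((⊤ : SimpleGraph n).adjMatrix R *ᵥ foldSum y)
      ((⊤ : SimpleGraph n).adjMatrix R *ᵥ foldSum y) := by
  rw [c4ComplBiadj_eq_fromBlocks, fromBlocks_mulVec, ← mulVec_add]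
  rfl

theorem dotProduct_c4ComplBiadj_mulVec [Fintype n] (x y : n ⊕ n → R) :
    x ⬝ᵥ (c4ComplBiadj R n *ᵥ y) =
      (∑ i, foldSum x i) * (∑ i, foldSum y i) - foldSum x ⬝ᵥ foldSum y := by
  rw [c4ComplBiadj_mulVec, ← dotProduct_adjMatrix_top_mulVec, ← Sum.elim_comp_inl_inr x,
    sumElim_dotProduct_sumElim, ← add_dotProduct]
  rfl

theorem charpoly_c4ComplAdj [Fintype n] [Nonempty n] :
    (c4ComplAdj R n).charpoly =
      (X - C (2 * (Fintype.card n : R) - 2)) * (X + C (2 * (Fintype.card n : R) - 2)) *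
        (X - C 2) ^ (Fintype.card n - 1) * (X + C 2) ^ (Fintype.card n - 1) *
        X ^ (2 * Fintype.card n) := by
  rw [c4ComplAdj, charpoly_fromBlocks_self, zero_sub, zero_add, c4ComplBiadj_eq_fromBlocks,
    fromBlocks_neg, charpoly_fromBlocks_self, charpoly_fromBlocks_self, sub_self, sub_self,
    charpoly_zero, ← neg_one_smul R, adjMatrix_top_add_self,
    ← one_smul R ((⊤ : SimpleGraph n).adjMatrix R), adjMatrix_top_add_self,
    charpoly_vecMulVec_sub_scalar, charpoly_vecMulVec_sub_scalar]
  simp only [dotProduct_one, Finset.sum_const, Finset.card_univ, nsmul_eq_mul, mul_one, mul_neg,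
    map_sub, map_mul, map_neg, map_natCast, map_ofNat]
  ring

theorem sum_c4ComplAdj_apply [Fintype n] [Nonempty n] (x : (n ⊕ n) ⊕ (n ⊕ n)) :
    ∑ y, c4ComplAdj R n x y = 2 * (Fintype.card n : R) - 2 := by
  rw [c4ComplAdj, c4ComplBiadj_eq_fromBlocks]
  rcases x with (x | x) | (x | x) <;>
  simp only [Fintype.sum_sum_type, fromBlocks_apply₁₁, fromBlocks_apply₁₂, fromBlocks_apply₂₁,
    fromBlocks_apply₂₂, Matrix.zero_apply, Finset.sum_const_zero, zero_add, add_zero,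
    sum_adjMatrix_top_apply] <;> ring

end C4Complement

theorem neg_add_mul_add_le (a b c d : ℝ) :
    -((a + b) * (c + d)) ≤ a * a + b * b + (c * c + d * d) := by
  nlinarith [sq_nonneg (a + b + c + d), sq_nonneg (a - b), sq_nonneg (c - d)]

theorem c4ComplAdj_quadForm_le {n : Type*} [Fintype n] [DecidableEq n]
    (w : (n ⊕ n) ⊕ (n ⊕ n) → ℝ) (hw : w ⬝ᵥ 1 = 0) :
    w ⬝ᵥ (c4ComplAdj ℝ n *ᵥ w) ≤ 2 * (w ⬝ᵥ w) := by
  set s := foldSum (w ∘ Sum.inl)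
  set t := foldSum (w ∘ Sum.inr)
  have hst : ∑ i, t i = -∑ i, s i := by
    simp only [dotProduct_one, Fintype.sum_sum_type] at hw
    simp only [s, t, foldSum, Pi.add_apply, Function.comp_apply, Finset.sum_add_distrib]
    linarith
  have hpair : -(s ⬝ᵥ t) ≤ w ⬝ᵥ w := by
    simp only [dotProduct, Fintype.sum_sum_type, ← Finset.sum_neg_distrib,
      ← Finset.sum_add_distrib]
    exact Finset.sum_le_sum fun i _ => neg_add_mul_add_le _ _ _ _
  have hform := dotProduct_fromBlocks_zero_mulVec (c4ComplBiadj ℝ n) w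
  rw [transpose_c4ComplBiadj, dotProduct_c4ComplBiadj_mulVec, hst] at hform
  rw [c4ComplAdj, hform]
  nlinarith [sq_nonneg (∑ i, s i)]

theorem secondEigLE_c4ComplAdj {n : Type*} [Fintype n] [DecidableEq n] [Nonempty n] :
    SecondEigLE (c4ComplAdj ℝ n) 2 :=
  ⟨1, one_ne_zero, c4ComplAdj_quadForm_le⟩

theorem exists_equiv_sum_val_elim (k : ℕ) :
    ∃ e : Fin (2 * k) ≃ Fin k ⊕ Fin k, ∀ i, ((Sum.elim id id (e i) : Fin k) : ℕ) = i / 2 := by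
  refine ⟨(finCongr (Nat.mul_comm 2 k)).trans <| finProdFinEquiv.symm.trans <|
    (Equiv.prodComm _ _).trans <| (finTwoEquiv.prodCongr (Equiv.refl _)).trans <|
      Equiv.boolProdEquivSum _, fun i => ?_⟩
  simp only [Equiv.trans_apply, Equiv.prodComm_apply, Equiv.prodCongr_apply,
    Equiv.boolProdEquivSum_apply]
  split_ifs <;> simp [Fin.coe_divNat]

/-- For `k ≥ 2`, the bipartite complement of `k` disjoint copies of `C₄`
(whose biadjacency matrix `B'` has `B' i j = 0` iff `i,j` lie in the same pair)
has spectrum `±(2k−2)` once, `±2` each `k−1` times and `0` with multiplicity `2k`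
(stated via the characteristic polynomial); in particular it is a `(2k−2)`-regular
Ramanujan graph. -/
theorem stmt17 {k : ℕ} (hk : 2 ≤ k)
    (B' : Matrix (Fin (2 * k)) (Fin (2 * k)) ℝ)
    (hB' : ∀ i j : Fin (2 * k), B' i j = if (i : ℕ) / 2 = (j : ℕ) / 2 then 0 else 1) :
    (fromBlocks 0 B' B'ᵀ 0).charpoly
        = (X - C (2 * (k : ℝ) - 2)) * (X + C (2 * (k : ℝ) - 2)) *
          (X - C 2) ^ (k - 1) * (X + C 2) ^ (k - 1) * X ^ (2 * k) ∧
    (∀ i, ∑ j, (fromBlocks 0 B' B'ᵀ 0) i j = 2 * (k : ℝ) - 2) ∧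
    SecondEigLE (fromBlocks 0 B' B'ᵀ 0) (2 * Real.sqrt (2 * (k : ℝ) - 3)) := by
  have : Nonempty (Fin k) := ⟨⟨0, by omega⟩⟩
  obtain ⟨e, he⟩ := exists_equiv_sum_val_elim k
  set σ := Equiv.sumCongr e e
  obtain rfl : B' = (c4ComplBiadj ℝ (Fin k)).submatrix e e := by
    ext i j
    simp [hB', c4ComplBiadj, SimpleGraph.adjMatrix_top, ← Fin.val_inj, he]
  have hA : fromBlocks 0 ((c4ComplBiadj ℝ (Fin k)).submatrix e e)
      ((c4ComplBiadj ℝ (Fin k)).submatrix e e)ᵀ 0 = (c4ComplAdj ℝ (Fin k)).submatrix σ σ := by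
    rw [transpose_submatrix, transpose_c4ComplBiadj]
    ext (i | i) (j | j) <;> rfl
  rw [hA]
  refine ⟨?_, fun i => ?_, ?_⟩
  · rw [← σ.symm_symm, ← reindex_apply, charpoly_reindex, charpoly_c4ComplAdj, Fintype.card_fin]
  · exact (σ.sum_comp _).trans <| (sum_c4ComplAdj_apply (σ i)).trans <| by rw [Fintype.card_fin]
  · refine (secondEigLE_c4ComplAdj.mono ?_).submatrix σ
    have : (1 : ℝ) ≤ 2 * k - 3 := by
      have : (2 : ℝ) ≤ k := by exact_mod_cast hk
      linarith
    nlinarith [Real.one_le_sqrt.mpr this]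
end
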